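/- arXiv:1612.04022 — 3 statements merged into one kernel-verified Lean document; each statement's English description precedes it below -/
import Mathlib

section
/- Let K ∈ ℝ^{n×n} be a symmetric positive semidefinite matrix and partition coordinates of ℝⁿ into m blocks. Define ρ_min(η) = η · sup{ αᵀKα / Σᵢ₌₁ᵐ α_[i]ᵀ K α_[i] : α ∈ ℝⁿ, Σᵢ α_[i]ᵀKα_[i] > 0 }. Then for any ρ ≥ ρ_min(η), any α ∈ ℝⁿ, and any block vectors Δα_[i] supported on the blocks, the quadratic form satisfies (α + η Σᵢ Δα_[i])ᵀ K (α + η Σᵢ Δα_[i]) ≤ αᵀKα + 2η Σᵢ Δα_[i]ᵀ K α + η ρ Σᵢ Δα_[i]ᵀ K Δα_[i]. -/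
/-! The key fact is that a positive semidefinite quadratic form `Q` satisfies
`Q(x₁ + ⋯ + xₘ) ≤ m (Q x₁ + ⋯ + Q xₘ)` (expand and use `2 xᵢᵀ K xⱼ ≤ Q xᵢ + Q xⱼ`), so the
block Rayleigh quotients `Q x / Σᵢ Q x_[i]` are bounded by `m` and their supremum `σ` satisfies
`Q x ≤ σ Σᵢ Q x_[i]` for every `x`, including when `Σᵢ Q x_[i] = 0`. Expanding the left-hand side
and applying this to `x = Σᵢ Δ_[i]`, whose blocks are the `Δ_[i]`, bounds the term `η² Q x`
by `η ρ Σᵢ Q Δ_[i]`. -/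

open Matrix

/-- Restriction of a vector to block `i` (block membership given by `B`). -/
def blockRestrict {n m : ℕ} (B : Fin n → Fin m) (x : Fin n → ℝ) (i : Fin m) :
    Fin n → ℝ :=
  fun j => if B j = i then x j else 0

namespace Matrix.IsSymm

variable {ι α : Type*} [Fintype ι] [CommRing α] {K : Matrix ι ι α}

lemma dotProduct_mulVec_comm (hK : K.IsSymm) (x y : ι → α) :
    x ⬝ᵥ K *ᵥ y = y ⬝ᵥ K *ᵥ x := by
  rw [← dotProduct_transpose_mulVec, hK.eq]

lemma dotProduct_mulVec_add_smul (hK : K.IsSymm) (x y : ι → α) (c : α) :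
    (x + c • y) ⬝ᵥ K *ᵥ (x + c • y) =
      x ⬝ᵥ K *ᵥ x + 2 * c * (y ⬝ᵥ K *ᵥ x) + c * c * (y ⬝ᵥ K *ᵥ y) := by
  simp only [mulVec_add, mulVec_smul, add_dotProduct, dotProduct_add, smul_dotProduct,
    dotProduct_smul, smul_eq_mul, hK.dotProduct_mulVec_comm x y]
  ring

end Matrix.IsSymm

namespace Matrix.PosSemidef

variable {ι κ : Type*} {K : Matrix ι ι ℝ}

lemma isSymm (hK : K.PosSemidef) : K.IsSymm :=
  isHermitian_iff_isSymm.mp hK.1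

variable [Fintype ι] [Fintype κ]

lemma dotProduct_mulVec_self_nonneg (hK : K.PosSemidef) (x : ι → ℝ) :
    0 ≤ x ⬝ᵥ K *ᵥ x := by
  simpa only [star_trivial] using hK.dotProduct_mulVec_nonneg x

lemma two_mul_dotProduct_mulVec_le (hK : K.PosSemidef) (x y : ι → ℝ) :
    2 * (x ⬝ᵥ K *ᵥ y) ≤ x ⬝ᵥ K *ᵥ x + y ⬝ᵥ K *ᵥ y := by
  have h := hK.dotProduct_mulVec_self_nonneg (x + (-1 : ℝ) • y)
  rw [hK.isSymm.dotProduct_mulVec_add_smul, hK.isSymm.dotProduct_mulVec_comm y x] at h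
  linarith

lemma sum_dotProduct_mulVec_sum_le (hK : K.PosSemidef) (x : κ → ι → ℝ) :
    (∑ i, x i) ⬝ᵥ K *ᵥ ∑ i, x i ≤ Fintype.card κ * ∑ i, x i ⬝ᵥ K *ᵥ x i := by
  have h : 2 * ((∑ i, x i) ⬝ᵥ K *ᵥ ∑ i, x i) ≤ 2 * (Fintype.card κ * ∑ i, x i ⬝ᵥ K *ᵥ x i) :=
    calc 2 * ((∑ i, x i) ⬝ᵥ K *ᵥ ∑ i, x i) = ∑ i, ∑ j, 2 * (x i ⬝ᵥ K *ᵥ x j) := by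
          simp only [mulVec_sum, dotProduct_sum, sum_dotProduct, Finset.mul_sum]
          exact Finset.sum_comm
      _ ≤ ∑ i, ∑ j, (x i ⬝ᵥ K *ᵥ x i + x j ⬝ᵥ K *ᵥ x j) := by
          gcongr with i _ j _
          exact hK.two_mul_dotProduct_mulVec_le (x i) (x j)
      _ = 2 * (Fintype.card κ * ∑ i, x i ⬝ᵥ K *ᵥ x i) := by
          simp only [Finset.sum_add_distrib, Finset.sum_const, Finset.card_univ, nsmul_eq_mul,
            ← Finset.mul_sum]
          ring
  linarith

end Matrix.PosSemidef

section Blocks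

variable {n m : ℕ} (B : Fin n → Fin m)

lemma sum_blockRestrict (x : Fin n → ℝ) : ∑ i, blockRestrict B x i = x := by
  ext j
  simp [blockRestrict, Finset.sum_apply]

lemma blockRestrict_sum_of_support {Δ : Fin m → Fin n → ℝ}
    (hsupp : ∀ i j, B j ≠ i → Δ i j = 0) (i : Fin m) :
    blockRestrict B (∑ k, Δ k) i = Δ i := by
  ext j
  by_cases h : B j = i
  · subst h
    simp only [blockRestrict, if_true, Finset.sum_apply]
    exact Finset.sum_eq_single (B j) (fun k _ hk => hsupp k j (Ne.symm hk)) (by simp)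
  · simp [blockRestrict, h, hsupp i j h]

def blockRayleighQuotients (K : Matrix (Fin n) (Fin n) ℝ) : Set ℝ :=
  {r : ℝ | ∃ α : Fin n → ℝ,
    0 < ∑ i, blockRestrict B α i ⬝ᵥ K.mulVec (blockRestrict B α i) ∧
    r = (α ⬝ᵥ K.mulVec α) / ∑ i, blockRestrict B α i ⬝ᵥ K.mulVec (blockRestrict B α i)}

variable {B} {K : Matrix (Fin n) (Fin n) ℝ}

lemma dotProduct_mulVec_le_card_mul_sum_blockRestrict (hK : K.PosSemidef) (x : Fin n → ℝ) :
    x ⬝ᵥ K *ᵥ x ≤ m * ∑ i, blockRestrict B x i ⬝ᵥ K *ᵥ blockRestrict B x i := by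
  simpa only [sum_blockRestrict, Fintype.card_fin] using
    hK.sum_dotProduct_mulVec_sum_le (blockRestrict B x)

lemma bddAbove_blockRayleighQuotients (hK : K.PosSemidef) :
    BddAbove (blockRayleighQuotients B K) := by
  refine ⟨m, ?_⟩
  rintro r ⟨x, hpos, rfl⟩
  rw [div_le_iff₀ hpos]
  exact dotProduct_mulVec_le_card_mul_sum_blockRestrict hK x

lemma dotProduct_mulVec_le_sSup_mul (hK : K.PosSemidef) (x : Fin n → ℝ) :
    x ⬝ᵥ K *ᵥ x ≤
      sSup (blockRayleighQuotients B K) * ∑ i, blockRestrict B x i ⬝ᵥ K *ᵥ blockRestrict B x i := by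
  set s := ∑ i, blockRestrict B x i ⬝ᵥ K *ᵥ blockRestrict B x i
  have hs : 0 ≤ s := Finset.sum_nonneg fun i _ => hK.dotProduct_mulVec_self_nonneg _
  rcases hs.eq_or_lt with hzero | hpos
  · calc x ⬝ᵥ K *ᵥ x ≤ m * s := dotProduct_mulVec_le_card_mul_sum_blockRestrict hK x
      _ = _ := by rw [← hzero, mul_zero, mul_zero]
  · rw [← div_le_iff₀ hpos]
    exact le_csSup (bddAbove_blockRayleighQuotients hK) ⟨x, hpos, rfl⟩

end Blocks

/-- For `ρ ≥ ρ_min(η)`, the quadratic form of an aggregated block update is bounded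
by `αᵀKα + 2η Σᵢ Δᵢᵀ K α + η ρ Σᵢ Δᵢᵀ K Δᵢ`. -/
theorem quadratic_block_separation
    (n m : ℕ) (B : Fin n → Fin m) (K : Matrix (Fin n) (Fin n) ℝ)
    (hK : K.PosSemidef) (η : ℝ) (hη : η ∈ Set.Icc (0 : ℝ) 1)
    (ρ : ℝ)
    (hρ : ρ ≥ η * sSup {r : ℝ | ∃ α : Fin n → ℝ,
        0 < ∑ i, blockRestrict B α i ⬝ᵥ K.mulVec (blockRestrict B α i) ∧
        r = (α ⬝ᵥ K.mulVec α) /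
          ∑ i, blockRestrict B α i ⬝ᵥ K.mulVec (blockRestrict B α i)})
    (α : Fin n → ℝ) (Δ : Fin m → Fin n → ℝ)
    (hsupp : ∀ i j, B j ≠ i → Δ i j = 0) :
    (α + η • ∑ i, Δ i) ⬝ᵥ K.mulVec (α + η • ∑ i, Δ i) ≤
      α ⬝ᵥ K.mulVec α + 2 * η * ∑ i, Δ i ⬝ᵥ K.mulVec α +
        η * ρ * ∑ i, Δ i ⬝ᵥ K.mulVec (Δ i) := by
  set σ := sSup (blockRayleighQuotients B K)
  set s := ∑ i, Δ i ⬝ᵥ K *ᵥ Δ i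
  have hs : 0 ≤ s := Finset.sum_nonneg fun i _ => hK.dotProduct_mulVec_self_nonneg (Δ i)
  have hsum : (∑ i, Δ i) ⬝ᵥ K *ᵥ ∑ i, Δ i ≤ σ * s := by
    simpa only [blockRestrict_sum_of_support B hsupp] using
      dotProduct_mulVec_le_sSup_mul (B := B) hK (∑ i, Δ i)
  have key : η * ((∑ i, Δ i) ⬝ᵥ K *ᵥ ∑ i, Δ i) ≤ ρ * s :=
    calc η * ((∑ i, Δ i) ⬝ᵥ K *ᵥ ∑ i, Δ i) ≤ η * σ * s := by
          rw [mul_assoc]; gcongr; exact hη.1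
      _ ≤ ρ * s := by gcongr; exact hρ
  rw [hK.isSymm.dotProduct_mulVec_add_smul, ← sum_dotProduct]
  nlinarith [mul_le_mul_of_nonneg_left key hη.1]
end

section
/- Suppose a nonnegative sequence (εₜ) satisfies, for every s ∈ [0,1] and every t, εₜ₊₁ ≤ (1 − cs)εₜ + (c s²/2)·B, where c = η(1−Θ) ∈ (0,1] and B ≥ 0. If ε_{t₀} ≤ B for some t₀, then for all t ≥ t₀, εₜ ≤ B / (1 + (c/2)(t − t₀)). -/
/-- Sublinear `O(1/t)` convergence for non-smooth losses: if for all `s ∈ [0,1]`,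
`εₜ₊₁ ≤ (1-cs)εₜ + (cs²/2)B` with `c = η(1-Θ) ∈ (0,1]`, and `ε_{t₀} ≤ B`, then
`εₜ ≤ B/(1 + (c/2)(t-t₀))` for all `t ≥ t₀`. -/
theorem sublinear_convergence_nonsmooth
    (ε : ℕ → ℝ) (hεnn : ∀ t, 0 ≤ ε t)
    (η Θ B : ℝ) (hη : η ∈ Set.Ioc (0 : ℝ) 1) (hΘ : Θ ∈ Set.Ico (0 : ℝ) 1)
    (hB : 0 ≤ B)
    (c : ℝ) (hc : c = η * (1 - Θ)) (hcmem : c ∈ Set.Ioc (0 : ℝ) 1)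
    (hstep : ∀ s ∈ Set.Icc (0 : ℝ) 1, ∀ t : ℕ,
      ε (t + 1) ≤ (1 - c * s) * ε t + (c * s ^ 2 / 2) * B)
    (t₀ : ℕ) (ht₀ : ε t₀ ≤ B) :
    ∀ t : ℕ, t₀ ≤ t → ε t ≤ B / (1 + (c / 2) * ((t : ℝ) - (t₀ : ℝ))) := by
  obtain ⟨hc0, hc1⟩ := hcmem
  intro t ht
  induction t, ht using Nat.le_induction with
  | base => simpa using ht₀
  | succ t ht ih =>
    set D : ℝ := 1 + (c / 2) * ((t : ℝ) - (t₀ : ℝ)) with hD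
    clear_value D
    have htt : (t₀ : ℝ) ≤ (t : ℝ) := by exact_mod_cast ht
    have hD1 : 1 ≤ D := by
      have h0 : 0 ≤ (c / 2) * ((t : ℝ) - (t₀ : ℝ)) :=
        mul_nonneg (by linarith) (by linarith)
      linarith
    have hDpos : (0 : ℝ) < D := by linarith
    have hs : (1 / D) ∈ Set.Icc (0 : ℝ) 1 :=
      ⟨by positivity, by rw [div_le_one hDpos]; linarith⟩
    have key := hstep (1 / D) hs t
    have h1 : 0 ≤ 1 - c * (1 / D) := by
      have : c * (1 / D) ≤ c := by
        rw [mul_one_div]; exact div_le_self hc0.le hD1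
      linarith
    have h2 : ε (t + 1) ≤ (1 - c * (1 / D)) * (B / D) + (c * (1 / D) ^ 2 / 2) * B :=
      le_trans key (by
        have := mul_le_mul_of_nonneg_left ih h1
        linarith)
    have h3 : (1 - c * (1 / D)) * (B / D) + (c * (1 / D) ^ 2 / 2) * B
        = B * (2 * D - c) / (2 * D ^ 2) := by
      field_simp; ring
    have h4 : B * (2 * D - c) / (2 * D ^ 2) ≤ B / (D + c / 2) := by
      rw [div_le_div_iff₀ (by positivity) (by linarith)]
      nlinarith [mul_nonneg hB (sq_nonneg c)]
    calc ε (t + 1) ≤ B * (2 * D - c) / (2 * D ^ 2) := h3 ▸ h2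
      _ ≤ B / (D + c / 2) := h4
      _ = _ := by push_cast; rw [hD]; ring_nf
end

section
/- Averaged duality gap bound: suppose G is convex on ℝⁿ and, for constants c ∈ (0,1], B ≥ 0 and a fixed s ∈ (0,1], the iterates satisfy c·s·G(α⁽ᵗ⁾) ≤ D(α⁽ᵗ⁺¹⁾) − D(α⁽ᵗ⁾) + c·(s²/2)·B for all t, where D is bounded above by D*. Then the average ᾱ = (1/(T−T₀)) Σ_{t=T₀}^{T−1} α⁽ᵗ⁾ satisfies G(ᾱ) ≤ (1/(c·s))·(D* − D(α^{(T₀)}))/(T−T₀) + (s/2)·B. -/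
open Finset

/-! Summing the per-iteration inequality over `t ∈ [T₀, T)` telescopes the dual increments to
`D(α_T) − D(α_{T₀}) ≤ D* − D(α_{T₀})`; dividing by `c·s·(T − T₀)` bounds the average gap over
the iterates, and Jensen's inequality moves the average inside `G`. -/

theorem ConvexOn.map_inv_card_smul_sum_le {𝕜 E β ι : Type*} [Field 𝕜] [LinearOrder 𝕜]
    [IsStrictOrderedRing 𝕜] [AddCommGroup E] [AddCommGroup β] [PartialOrder β]
    [IsOrderedAddMonoid β] [Module 𝕜 E] [Module 𝕜 β] [IsStrictOrderedModule 𝕜 β]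
    {s : Set E} {f : E → β} {t : Finset ι} {p : ι → E}
    (hf : ConvexOn 𝕜 s f) (ht : t.Nonempty) (hmem : ∀ i ∈ t, p i ∈ s) :
    f ((#t : 𝕜)⁻¹ • ∑ i ∈ t, p i) ≤ (#t : 𝕜)⁻¹ • ∑ i ∈ t, f (p i) := by
  have hcard : (#t : 𝕜) ≠ 0 := by exact_mod_cast ht.card_ne_zero
  rw [smul_sum, smul_sum]
  exact hf.map_sum_le (fun _ _ => by positivity)
    (by rw [sum_const, nsmul_eq_mul, mul_inv_cancel₀ hcard]) hmem

section Telescoping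

variable {𝕜 : Type*} [Field 𝕜] [LinearOrder 𝕜] [IsStrictOrderedRing 𝕜]
  {g u : ℕ → 𝕜} {a b : 𝕜} {m n : ℕ}

theorem mul_sum_Ico_le_of_le_sub_add (hstep : ∀ t, a * g t ≤ u (t + 1) - u t + b)
    (hmn : m ≤ n) : a * ∑ t ∈ Ico m n, g t ≤ u n - u m + #(Ico m n) * b := by
  calc a * ∑ t ∈ Ico m n, g t
      ≤ ∑ t ∈ Ico m n, (u (t + 1) - u t + b) := by
        rw [mul_sum]; exact sum_le_sum fun t _ => hstep t
    _ = u n - u m + #(Ico m n) * b := by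
        rw [sum_add_distrib, sum_Ico_sub (f := u) hmn, sum_const, nsmul_eq_mul]

theorem inv_card_mul_sum_Ico_le_of_le_sub_add (ha : 0 < a)
    (hstep : ∀ t, a * g t ≤ u (t + 1) - u t + b) (hmn : m < n) :
    (#(Ico m n) : 𝕜)⁻¹ * ∑ t ∈ Ico m n, g t ≤
      (1 / a) * ((u n - u m) / #(Ico m n)) + b / a := by
  have hk : (0 : 𝕜) < #(Ico m n) := by
    exact_mod_cast (nonempty_Ico.mpr hmn).card_pos
  rw [inv_mul_le_iff₀ hk]
  calc ∑ t ∈ Ico m n, g t ≤ (u n - u m + #(Ico m n) * b) / a :=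
        (le_div_iff₀' ha).mpr (mul_sum_Ico_le_of_le_sub_add hstep hmn.le)
    _ = _ := by field_simp

end Telescoping

theorem averaged_duality_gap_bound_general
    (N : ℕ) (G D : (Fin N → ℝ) → ℝ) (hG : ConvexOn ℝ Set.univ G)
    (Dstar : ℝ) (hD : ∀ β : Fin N → ℝ, D β ≤ Dstar)
    (B s : ℝ) (hs : s ∈ Set.Ioc (0 : ℝ) 1)
    (c : ℝ) (hcmem : c ∈ Set.Ioc (0 : ℝ) 1)
    (α : ℕ → Fin N → ℝ)
    (hstep : ∀ t : ℕ, c * s * G (α t) ≤ D (α (t + 1)) - D (α t) + c * (s ^ 2 / 2) * B)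
    (T₀ T : ℕ) (hT : T₀ < T) :
    G ((((T : ℝ) - (T₀ : ℝ))⁻¹) • ∑ t ∈ Finset.Ico T₀ T, α t) ≤
      (1 / (c * s)) * ((Dstar - D (α T₀)) / ((T : ℝ) - (T₀ : ℝ))) + (s / 2) * B := by
  have hcs : 0 < c * s := mul_pos hcmem.1 hs.1
  have hcard : (#(Ico T₀ T) : ℝ) = T - T₀ := by
    rw [Nat.card_Ico, Nat.cast_sub hT.le]
  have hdrift : c * (s ^ 2 / 2) * B / (c * s) = s / 2 * B := by
    field_simp [hcmem.1.ne']
  rw [← hcard]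
  calc G ((#(Ico T₀ T) : ℝ)⁻¹ • ∑ t ∈ Ico T₀ T, α t)
      ≤ (#(Ico T₀ T) : ℝ)⁻¹ * ∑ t ∈ Ico T₀ T, G (α t) :=
        hG.map_inv_card_smul_sum_le (nonempty_Ico.mpr hT) fun _ _ => Set.mem_univ _
    _ ≤ (1 / (c * s)) * ((D (α T) - D (α T₀)) / #(Ico T₀ T)) + s / 2 * B := by
        rw [← hdrift]; exact inv_card_mul_sum_Ico_le_of_le_sub_add (g := fun t => G (α t))
          (u := fun t => D (α t)) hcs hstep hT
    _ ≤ (1 / (c * s)) * ((Dstar - D (α T₀)) / #(Ico T₀ T)) + s / 2 * B := by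
        gcongr; exact hD _

/-- Averaged duality-gap bound: telescoping the per-iteration inequality
`c·s·G(α⁽ᵗ⁾) ≤ D(α⁽ᵗ⁺¹⁾) − D(α⁽ᵗ⁾) + c·(s²/2)·B` and applying Jensen's inequality to
the convex gap `G` yields
`G(ᾱ) ≤ (1/(cs))·(D* − D(α^{(T₀)}))/(T−T₀) + (s/2)·B` for the average
`ᾱ = (1/(T−T₀)) Σ_{t=T₀}^{T−1} α⁽ᵗ⁾`. -/
theorem averaged_duality_gap_bound
    (N : ℕ) (G D : (Fin N → ℝ) → ℝ) (hG : ConvexOn ℝ Set.univ G)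
    (Dstar : ℝ) (hD : ∀ β : Fin N → ℝ, D β ≤ Dstar)
    (η Θ B s : ℝ) (hη : η ∈ Set.Ioc (0 : ℝ) 1) (hΘ : Θ ∈ Set.Ico (0 : ℝ) 1)
    (hB : 0 ≤ B) (hs : s ∈ Set.Ioc (0 : ℝ) 1)
    (c : ℝ) (hc : c = η * (1 - Θ)) (hcmem : c ∈ Set.Ioc (0 : ℝ) 1)
    (α : ℕ → Fin N → ℝ)
    (hstep : ∀ t : ℕ, c * s * G (α t) ≤ D (α (t + 1)) - D (α t) + c * (s ^ 2 / 2) * B)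
    (T₀ T : ℕ) (hT : T₀ < T) :
    G ((((T : ℝ) - (T₀ : ℝ))⁻¹) • ∑ t ∈ Finset.Ico T₀ T, α t) ≤
      (1 / (c * s)) * ((Dstar - D (α T₀)) / ((T : ℝ) - (T₀ : ℝ))) + (s / 2) * B :=
  averaged_duality_gap_bound_general N G D hG Dstar hD B s hs c hcmem α hstep T₀ T hT
end
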